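/- arXiv:2104.13696 — 3 statements merged into one kernel-verified Lean document; each statement's English description precedes it below -/
import Mathlib

section
/- Fix a real δ > 0 and integer m ≥ 2. For q = 1,…,m and j ∈ ℤ define the closed intervals I_q(j) = [qδ + mjδ, (q+m−1)δ + mjδ]. Then (a) for each fixed q, the intervals I_q(j), j ∈ ℤ, are pairwise disjoint, and (b) every real x belongs to I_q(j) for some j for at least m−1 values of q ∈ {1,…,m}. -/
theorem stmt_6 (δ : ℝ) (hδ : 0 < δ) (m : ℕ) (hm : 2 ≤ m)
    (I : ℕ → ℤ → Set ℝ)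
    (hI : ∀ q j, I q j = Set.Icc ((q : ℝ) * δ + m * j * δ) (((q : ℝ) + m - 1) * δ + m * j * δ)) :
    (∀ q ∈ Finset.Icc 1 m, ∀ j j' : ℤ, j ≠ j' → Disjoint (I q j) (I q j')) ∧
    (∀ x : ℝ, (m : ℕ) - 1 ≤ {q ∈ Set.Icc 1 m | ∃ j : ℤ, x ∈ I q j}.ncard) := by
  have hm2 : (2 : ℝ) ≤ (m : ℝ) := by exact_mod_cast hm
  -- helper: disjointness for j < j'
  have key : ∀ q : ℕ, ∀ j j' : ℤ, j < j' → Disjoint (I q j) (I q j') := by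
    intro q j j' hlt
    rw [hI, hI, Set.disjoint_left]
    rintro a ⟨_, ha2⟩ ⟨hb1, _⟩
    have hj : (j : ℝ) + 1 ≤ (j' : ℝ) := by exact_mod_cast hlt
    nlinarith [mul_pos hδ (by linarith : (0:ℝ) < (m:ℝ) - 1)]
  constructor
  · intro q _ j j' hne
    rcases lt_or_gt_of_ne hne with h | h
    · exact key q j j' h
    · exact (key q j' j h).symm
  · intro x
    set n : ℤ := ⌊x / δ⌋ with hn
    have hxl : (n : ℝ) * δ ≤ x := by
      have := Int.floor_le (x / δ)
      calc (n : ℝ) * δ ≤ (x / δ) * δ := by nlinarith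
        _ = x := by field_simp
    have hxu : x ≤ ((n : ℝ) + 1) * δ := by
      have := (Int.lt_floor_add_one (x / δ)).le
      calc x = (x / δ) * δ := by field_simp
        _ ≤ ((n : ℝ) + 1) * δ := by nlinarith
    set f : ℕ → ℕ := fun i => ((n - i - 1) % m).toNat + 1 with hf
    have hmpos : (0 : ℤ) < (m : ℤ) := by positivity
    have hfval : ∀ i : ℕ, (f i : ℤ) = (n - i - 1) % m + 1 := by
      intro i
      simp only [hf]
      push_cast
      rw [Int.toNat_of_nonneg (Int.emod_nonneg _ hmpos.ne')]
    have hmem : ∀ i : ℕ, i < m - 1 → f i ∈ {q ∈ Set.Icc 1 m | ∃ j : ℤ, x ∈ I (q) j} := by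
      intro i hi
      have hlt : (n - i - 1) % m < m := Int.emod_lt_of_pos _ hmpos
      have hge : (0:ℤ) ≤ (n - i - 1) % m := Int.emod_nonneg _ hmpos.ne'
      constructor
      · constructor
        · simp [hf]
        · have : (f i : ℤ) ≤ m := by rw [hfval]; omega
          exact_mod_cast this
      · refine ⟨(n - i - 1) / m, ?_⟩
        rw [hI]
        have hkey : (f i : ℤ) + m * ((n - i - 1) / m) = n - i := by
          rw [hfval]
          have := Int.emod_add_mul_ediv (n - i - 1) m
          omega
        have hkeyR : (f i : ℝ) + (m : ℝ) * ((((n - i - 1) / m) : ℤ) : ℝ) = (n : ℝ) - i := by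
          exact_mod_cast congrArg (Int.cast : ℤ → ℝ) hkey
        have him : (i : ℝ) ≤ (m : ℝ) - 2 := by
          have : (i : ℝ) ≤ ((m - 2 : ℕ) : ℝ) := by exact_mod_cast Nat.le_of_lt_succ (by omega)
          rw [Nat.cast_sub hm] at this
          push_cast at this
          linarith
        constructor
        · nlinarith [Nat.cast_nonneg (α := ℝ) i]
        · nlinarith
    have hinj : Set.InjOn f (Finset.range (m - 1)) := by
      intro i hi i' hi' hfe
      simp only [Finset.coe_range, Set.mem_Iio] at hi hi'
      have h1 : (n - i - 1) % m = (n - i' - 1) % m := by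
        have := congrArg (fun k : ℕ => (k : ℤ)) hfe
        simp only [hfval i, hfval i'] at *
        omega
      have hdvd : (m:ℤ) ∣ ((i : ℤ) - i') := by
        have := Int.ModEq.dvd (h1 : Int.ModEq m _ _)
        have heq : (n - (i':ℤ) - 1) - (n - i - 1) = (i : ℤ) - i' := by ring
        rwa [heq] at this
      have h0 : ((i : ℤ) - i') = 0 := by
        refine Int.eq_zero_of_dvd_of_natAbs_lt_natAbs hdvd ?_
        simp only [Int.natAbs_natCast]
        omega
      omega
    have hsub : ↑((Finset.range (m - 1)).image f) ⊆ {q ∈ Set.Icc 1 m | ∃ j : ℤ, x ∈ I q j} := by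
      intro q hq
      simp only [Finset.coe_image, Set.mem_image, Finset.coe_range, Set.mem_Iio] at hq
      obtain ⟨i, hi, rfl⟩ := hq
      exact hmem i hi
    have hfin : {q ∈ Set.Icc 1 m | ∃ j : ℤ, x ∈ I q j}.Finite :=
      (Set.finite_Icc 1 m).subset (fun q hq => hq.1)
    calc m - 1 = ((Finset.range (m - 1)).image f).card := by
          rw [Finset.card_image_of_injOn hinj, Finset.card_range]
      _ = (↑((Finset.range (m - 1)).image f) : Set ℕ).ncard := (Set.ncard_coe_finset _).symm
      _ ≤ _ := Set.ncard_le_ncard hsub hfin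
end

section
/- Let 0 < ε₁ < 1, 0 < α < 1/2, and let M : ℕ × ℕ → ℝ≥0 satisfy: M(0,i) ≤ 1 for all i ≥ 1; for each k, if 1 ≤ i ≤ k then M(k+1, i) ≤ ε₁·M(k, i+1) + ε₁^k; and if i ≥ k+1 then M(k+1, i) ≤ ε₁^{(2α−1)(k+1)}. Then M(k,i) ≤ (k+1)·ε₁^{αk − (1−α)i} for every k ≥ 0 and i ≥ 1. -/
theorem stmt_13 (ε₁ α : ℝ) (h0 : 0 < ε₁) (h1 : ε₁ < 1) (hα0 : 0 < α) (hα1 : α < 1 / 2)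
    (M : ℕ → ℕ → ℝ) (hMnn : ∀ k i, 0 ≤ M k i)
    (hM0 : ∀ i, 1 ≤ i → M 0 i ≤ 1)
    (hrec : ∀ k i, 1 ≤ i → i ≤ k → M (k + 1) i ≤ ε₁ * M k (i + 1) + ε₁ ^ k)
    (hbig : ∀ k i, k + 1 ≤ i → M (k + 1) i ≤ ε₁ ^ ((2 * α - 1) * ((k : ℝ) + 1))) :
    ∀ k i, 1 ≤ i → M k i ≤ ((k : ℝ) + 1) * ε₁ ^ (α * k - (1 - α) * i) := by
  intro k
  induction k with
  | zero =>
    intro i hi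
    have hi1 : (1 : ℝ) ≤ (i : ℝ) := by exact_mod_cast hi
    have hexp : α * ((0 : ℕ) : ℝ) - (1 - α) * i ≤ 0 := by push_cast; nlinarith
    have h1' : (1 : ℝ) ≤ ε₁ ^ (α * ((0 : ℕ) : ℝ) - (1 - α) * i) :=
      Real.one_le_rpow_of_pos_of_le_one_of_nonpos h0 h1.le hexp
    calc M 0 i ≤ 1 := hM0 i hi
      _ ≤ (((0 : ℕ) : ℝ) + 1) * ε₁ ^ (α * ((0 : ℕ) : ℝ) - (1 - α) * i) := by nlinarith
  | succ k ih =>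
    intro i hi
    have hi1 : (1 : ℝ) ≤ (i : ℝ) := by exact_mod_cast hi
    push_cast
    by_cases hik : i ≤ k
    · have hk1 : (1 : ℝ) ≤ (k : ℝ) := le_trans hi1 (by exact_mod_cast hik)
      have h2 := hrec k i hi hik
      have h3 := ih (i + 1) (by omega)
      push_cast at h3
      have hεk : (ε₁ : ℝ) ^ (k : ℕ) ≤ ε₁ ^ (α * ((k : ℝ) + 1) - (1 - α) * i) := by
        rw [← Real.rpow_natCast ε₁ k]
        exact Real.rpow_le_rpow_of_exponent_ge h0 h1.le (by nlinarith)
      have hpow : ε₁ * ε₁ ^ (α * (k : ℝ) - (1 - α) * ((i : ℝ) + 1)) =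
          ε₁ ^ (α * ((k : ℝ) + 1) - (1 - α) * i) := by
        rw [show α * ((k : ℝ) + 1) - (1 - α) * i = 1 + (α * (k : ℝ) - (1 - α) * ((i : ℝ) + 1)) by ring,
          Real.rpow_add h0, Real.rpow_one]
      calc M (k + 1) i ≤ ε₁ * M k (i + 1) + ε₁ ^ k := h2
        _ ≤ ε₁ * (((k : ℝ) + 1) * ε₁ ^ (α * (k : ℝ) - (1 - α) * ((i : ℝ) + 1))) + ε₁ ^ k := by
            have := mul_le_mul_of_nonneg_left h3 h0.le
            linarith
        _ = ((k : ℝ) + 1) * (ε₁ * ε₁ ^ (α * (k : ℝ) - (1 - α) * ((i : ℝ) + 1))) + ε₁ ^ k := by ring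
        _ ≤ ((k : ℝ) + 1) * ε₁ ^ (α * ((k : ℝ) + 1) - (1 - α) * i)
            + ε₁ ^ (α * ((k : ℝ) + 1) - (1 - α) * i) := by
            rw [hpow]; exact add_le_add le_rfl hεk
        _ = ((k : ℝ) + 1 + 1) * ε₁ ^ (α * ((k : ℝ) + 1) - (1 - α) * i) := by ring
    · have hik' : k + 1 ≤ i := by omega
      have h2 := hbig k i hik'
      have hki : (k : ℝ) + 1 ≤ (i : ℝ) := by exact_mod_cast hik'
      have h3 : ε₁ ^ ((2 * α - 1) * ((k : ℝ) + 1)) ≤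
          ε₁ ^ (α * ((k : ℝ) + 1) - (1 - α) * i) :=
        Real.rpow_le_rpow_of_exponent_ge h0 h1.le (by nlinarith)
      have hpos : (0 : ℝ) ≤ ε₁ ^ (α * ((k : ℝ) + 1) - (1 - α) * i) :=
        (Real.rpow_pos_of_pos h0 _).le
      have hk0 : (0 : ℝ) ≤ (k : ℝ) := Nat.cast_nonneg k
      calc M (k + 1) i ≤ ε₁ ^ ((2 * α - 1) * ((k : ℝ) + 1)) := h2
        _ ≤ ε₁ ^ (α * ((k : ℝ) + 1) - (1 - α) * i) := h3
        _ ≤ ((k : ℝ) + 1 + 1) * ε₁ ^ (α * ((k : ℝ) + 1) - (1 - α) * i) := by nlinarith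
end

section
/- Let λ₁,…,λ_m ∈ ℝⁿ be vectors such that every n-element subset of {λ₁,…,λ_m} is linearly independent, with m ≥ n. Then there is a constant C > 0 such that for every x ∈ ℝⁿ, the inequality |x| ≤ C·|⟨λ_q, x⟩| holds for at least m − n + 1 indices q ∈ {1,…,m}. -/
theorem stmt_16 (n m : ℕ) (hn : 1 ≤ n) (hm : n ≤ m)
    (lam : Fin m → EuclideanSpace ℝ (Fin n))
    (hind : ∀ s : Finset (Fin m), s.card = n →
      LinearIndependent ℝ (fun q : s => lam q)) :
    ∃ C : ℝ, 0 < C ∧ ∀ x : EuclideanSpace ℝ (Fin n),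
      m - n + 1 ≤ {q : Fin m | ‖x‖ ≤ C * |(inner ℝ (lam q) x : ℝ)|}.ncard := by
  classical
  haveI : Nontrivial (EuclideanSpace ℝ (Fin n)) := by
    apply Module.nontrivial_of_finrank_pos (R := ℝ)
    rw [finrank_euclideanSpace_fin]; omega
  set 𝒮 : Finset (Finset (Fin m)) := Finset.powersetCard n Finset.univ with h𝒮
  have h𝒮ne : 𝒮.Nonempty := Finset.powersetCard_nonempty.2 (by simpa using hm)
  have hScard : ∀ S : 𝒮, (S : Finset (Fin m)).card = n := fun S =>
    (Finset.mem_powersetCard.1 S.2).2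
  have hSne : ∀ S : 𝒮, (S : Finset (Fin m)).Nonempty := fun S =>
    Finset.card_pos.1 (by rw [hScard S]; omega)
  set g : EuclideanSpace ℝ (Fin n) → ℝ := fun x =>
    𝒮.attach.inf' (h𝒮ne.attach) fun S =>
      (S : Finset (Fin m)).sup' (hSne S) fun q => |(inner ℝ (lam q) x : ℝ)| with hg
  have hgcont : Continuous g := by
    apply Continuous.finset_inf'_apply
    intro S _
    apply Continuous.finset_sup'_apply
    intro q _
    exact (Continuous.inner continuous_const continuous_id).abs
  -- positivity of g on nonzero vectors
  have hgpos : ∀ x : EuclideanSpace ℝ (Fin n), x ≠ 0 → 0 < g x := by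
    intro x hx
    rw [hg, Finset.lt_inf'_iff]
    intro S _
    by_contra hle
    push_neg at hle
    have hzero : ∀ q ∈ (S : Finset (Fin m)), (inner ℝ (lam q) x : ℝ) = 0 := by
      intro q hq
      have h1 : |(inner ℝ (lam q) x : ℝ)| ≤ 0 := by
        have := Finset.le_sup' (f := fun q => |(inner ℝ (lam q) x : ℝ)|) hq
        linarith
      have := abs_nonneg (inner ℝ (lam q) x : ℝ)
      exact abs_eq_zero.1 (le_antisymm h1 this)
    have hli := hind S (hScard S)
    have hcard : Fintype.card (S : Finset (Fin m)) =
        Module.finrank ℝ (EuclideanSpace ℝ (Fin n)) := by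
      rw [Fintype.card_coe, hScard S, finrank_euclideanSpace_fin]
    haveI : Nonempty (S : Finset (Fin m)) := (hSne S).to_subtype
    have hspan := hli.span_eq_top_of_card_eq_finrank hcard
    have hx0 : ∀ v ∈ Submodule.span ℝ (Set.range fun q : (S : Finset (Fin m)) => lam q),
        (inner ℝ v x : ℝ) = 0 := by
      intro v hv
      induction hv using Submodule.span_induction with
      | mem v hv => obtain ⟨q, rfl⟩ := hv; exact hzero q q.2
      | zero => simp
      | add u w _ _ hu hw => rw [inner_add_left, hu, hw]; ring
      | smul c u _ hu => rw [real_inner_smul_left, hu]; ring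
    have : (inner ℝ x x : ℝ) = 0 := hx0 x (hspan ▸ Submodule.mem_top)
    exact hx (inner_self_eq_zero.1 this)
  -- compactness: minimize g on the unit sphere
  have hcpt : IsCompact (Metric.sphere (0 : EuclideanSpace ℝ (Fin n)) 1) :=
    isCompact_sphere 0 1
  have hsne : (Metric.sphere (0 : EuclideanSpace ℝ (Fin n)) 1).Nonempty :=
    NormedSpace.sphere_nonempty.2 zero_le_one
  obtain ⟨x₀, hx₀, hmin⟩ := hcpt.exists_isMinOn hsne hgcont.continuousOn
  have hx₀norm : ‖x₀‖ = 1 := by simpa using mem_sphere_zero_iff_norm.1 hx₀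
  set ε := g x₀ with hε
  have hεpos : 0 < ε := hgpos x₀ (by intro h; rw [h] at hx₀norm; simp at hx₀norm)
  refine ⟨ε⁻¹, inv_pos.2 hεpos, ?_⟩
  intro x
  by_cases hx : x = 0
  · subst hx
    have : {q : Fin m | ‖(0 : EuclideanSpace ℝ (Fin n))‖ ≤
        ε⁻¹ * |(inner ℝ (lam q) 0 : ℝ)|} = Set.univ := by
      ext q; simp
    rw [this, Set.ncard_univ]
    simp only [Nat.card_eq_fintype_card, Fintype.card_fin]
    omega
  · -- main case
    set u : EuclideanSpace ℝ (Fin n) := ‖x‖⁻¹ • x with hu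
    have hxn : (0 : ℝ) < ‖x‖ := norm_pos_iff.2 hx
    have hun : ‖u‖ = 1 := by
      rw [hu, norm_smul, norm_inv, norm_norm, inv_mul_cancel₀ hxn.ne']
    have hεu : ε ≤ g u := hmin (mem_sphere_zero_iff_norm.2 hun)
    set B : Finset (Fin m) :=
      Finset.univ.filter (fun q => |(inner ℝ (lam q) x : ℝ)| < ε * ‖x‖) with hB
    have hBcard : B.card < n := by
      by_contra hc
      push_neg at hc
      obtain ⟨S, hSB, hScardn⟩ := Finset.exists_subset_card_eq hc
      have hSmem : S ∈ 𝒮 := Finset.mem_powersetCard.2 ⟨Finset.subset_univ S, hScardn⟩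
      have h1 : g u ≤ S.sup' (hSne ⟨S, hSmem⟩) fun q => |(inner ℝ (lam q) u : ℝ)| :=
        Finset.inf'_le _ (Finset.mem_attach _ ⟨S, hSmem⟩)
      have h2 : (S.sup' (hSne ⟨S, hSmem⟩) fun q => |(inner ℝ (lam q) u : ℝ)|) < ε := by
        rw [Finset.sup'_lt_iff]
        intro q hq
        have hqB : q ∈ B := hSB hq
        rw [hB, Finset.mem_filter] at hqB
        have : (inner ℝ (lam q) u : ℝ) = ‖x‖⁻¹ * (inner ℝ (lam q) x : ℝ) := by
          rw [hu, real_inner_smul_right]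
        rw [this, abs_mul, abs_inv, abs_norm]
        calc ‖x‖⁻¹ * |(inner ℝ (lam q) x : ℝ)| < ‖x‖⁻¹ * (ε * ‖x‖) := by
              apply mul_lt_mul_of_pos_left hqB.2 (inv_pos.2 hxn)
          _ = ε := by field_simp
      linarith
    have hBc : ∀ q ∈ Bᶜ, ‖x‖ ≤ ε⁻¹ * |(inner ℝ (lam q) x : ℝ)| := by
      intro q hq
      rw [Finset.mem_compl, hB, Finset.mem_filter] at hq
      push_neg at hq
      have h1 : ε * ‖x‖ ≤ |(inner ℝ (lam q) x : ℝ)| := hq (Finset.mem_univ q)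
      calc ‖x‖ = ε⁻¹ * (ε * ‖x‖) := by field_simp
        _ ≤ ε⁻¹ * |(inner ℝ (lam q) x : ℝ)| :=
            mul_le_mul_of_nonneg_left h1 (inv_pos.2 hεpos).le
    have hsub : (Bᶜ : Set (Fin m)) ⊆ {q : Fin m | ‖x‖ ≤ ε⁻¹ * |(inner ℝ (lam q) x : ℝ)|} := by
      intro q hq
      exact hBc q (by simpa using hq)
    have h1 := Set.ncard_le_ncard hsub (Set.toFinite _)
    rw [← Finset.coe_compl, Set.ncard_coe_finset, Finset.card_compl, Fintype.card_fin] at h1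
    omega
end
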